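/- Averaged swap decomposition: Let f be submodular and monotone with f(∅) ≥ 0, |T| = k, u ∉ T. Then (1/k)·Σ_{y∈T}[f(T ∪ {u} \ {y}) − f(T)] ≥ (f(T ∪ {u}) − f(T)) − f(T)/k. -/

import Mathlib

def Submodular {Ω : Type*} [DecidableEq Ω] (f : Finset Ω → ℝ) : Prop :=
  ∀ S T : Finset Ω, S ⊆ T → ∀ x ∉ T, f (insert x T) - f T ≤ f (insert x S) - f S

/-
Submodularity gives f(T ∪ {u} \ {y}) − f(T \ {y}) ≥ f(T ∪ {u}) − f(T) for every y ∈ T, so each swap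
loses at most the marginal value f(T) − f(T \ {y}) of y. These marginal values sum to at most
f(T) − f(∅) ≤ f(T): adding the elements of T one at a time, the marginal value of y within T is at
most its marginal value within any subset containing it, and the latter telescope.
-/

namespace Submodular

variable {Ω : Type*} [DecidableEq Ω] {f : Finset Ω → ℝ}

theorem sub_erase_le (hf : Submodular f) {S T : Finset Ω} (hST : S ⊆ T) {y : Ω} (hy : y ∈ S) :
    f T - f (T.erase y) ≤ f S - f (S.erase y) := by
  have h := hf (S.erase y) (T.erase y) (Finset.erase_subset_erase y hST) y (Finset.notMem_erase y T)
  rwa [Finset.insert_erase (hST hy), Finset.insert_erase hy] at h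

theorem sum_sub_erase_le (hf : Submodular f) (T : Finset Ω) :
    ∑ y ∈ T, (f T - f (T.erase y)) ≤ f T - f ∅ := by
  induction T using Finset.induction_on with
  | empty => simp
  | @insert x S hx ih =>
    rw [Finset.sum_insert hx, Finset.erase_insert hx]
    have hmarg : ∑ y ∈ S, (f (insert x S) - f ((insert x S).erase y))
        ≤ ∑ y ∈ S, (f S - f (S.erase y)) :=
      Finset.sum_le_sum fun y hy => hf.sub_erase_le (Finset.subset_insert x S) hy
    linarith

theorem sub_add_sub_erase_le (hf : Submodular f) {T : Finset Ω} {u : Ω} (hu : u ∉ T) (y : Ω) :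
    (f (insert u T) - f T) + (f (T.erase y) - f T) ≤ f (insert u (T.erase y)) - f T := by
  have := hf (T.erase y) T (Finset.erase_subset y T) u hu
  linarith

end Submodular

theorem stmt_10_general {Ω : Type*} [DecidableEq Ω] (f : Finset Ω → ℝ)
    (hsub : Submodular f) (h0 : 0 ≤ f ∅)
    (k : ℕ) (hk : 0 < k) (T : Finset Ω) (hTk : T.card = k)
    (u : Ω) (hu : u ∉ T) :
    (∑ y ∈ T, (f (insert u (T.erase y)) - f T)) / k
      ≥ (f (insert u T) - f T) - f T / k := by
  have hswap := Finset.sum_le_sum fun y (_ : y ∈ T) => hsub.sub_add_sub_erase_le hu y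
  rw [Finset.sum_add_distrib, Finset.sum_const, hTk, nsmul_eq_mul] at hswap
  have hloss : ∑ y ∈ T, (f (T.erase y) - f T) = -∑ y ∈ T, (f T - f (T.erase y)) := by
    rw [← Finset.sum_neg_distrib]
    simp only [neg_sub]
  have htel := hsub.sum_sub_erase_le T
  have hkpos : (0 : ℝ) < k := by exact_mod_cast hk
  rw [ge_iff_le, sub_le_iff_le_add, ← add_div, le_div_iff₀ hkpos]
  linarith

theorem stmt_10 {Ω : Type*} [DecidableEq Ω] (f : Finset Ω → ℝ)
    (hsub : Submodular f) (hmono : Monotone f) (h0 : 0 ≤ f ∅)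
    (k : ℕ) (hk : 0 < k) (T : Finset Ω) (hTk : T.card = k)
    (u : Ω) (hu : u ∉ T) :
    (∑ y ∈ T, (f (insert u (T.erase y)) - f T)) / k
      ≥ (f (insert u T) - f T) - f T / k :=
  stmt_10_general f hsub h0 k hk T hTk u hu
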